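/- arXiv:2303.10159 — 2 statements merged into one kernel-verified Lean document; each statement's English description precedes it below -/
import Mathlib

section
/- Let M be a (2n+1)-dimensional generalized (κ,μ)-space form admitting a conformal Ricci soliton (g, V, λ) with V = bξ for a smooth function b, pointwise collinear with the Reeb field ξ. Then X(b)η(Y) + Y(b)η(X) + 2S(X,Y) = [2λ - (p + 2/(2n+1))]g(X,Y) for all X,Y; in particular, evaluating at Y = ξ gives db = [λ - (p/2 + 1/(2n+1)) - 2n(f₁-f₃)]η. -/
/-! Since `∇ξ` is skew, `ξ` is Killing and the `b`-term of `L_{bξ} g` drops out of the soliton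
equation. Evaluating what remains at `(ξ, ξ)` gives `ξ(b)`, and then at `(X, ξ)` gives `X(b)`. -/

theorem soliton_eq_of_killing_reeb {V : Type*} {g S L : V → V → ℝ} {nab : V → V → V}
    {η Db : V → ℝ} {ξ : V} {b c : ℝ}
    (hskew : ∀ X Y, g (nab X ξ) Y + g X (nab Y ξ) = 0)
    (hLie : ∀ X Y, L X Y = b * (g (nab X ξ) Y + g X (nab Y ξ)) + Db X * η Y + Db Y * η X)
    (hsol : ∀ X Y, L X Y + 2 * S X Y = c * g X Y) (X Y : V) :
    Db X * η Y + Db Y * η X + 2 * S X Y = c * g X Y := by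
  simpa only [hLie, hskew, mul_zero, zero_add] using hsol X Y

theorem eq_mul_eta_of_symmetrized_eq {V : Type*} {g S : V → V → ℝ} {η D : V → ℝ} {ξ : V}
    {c s : ℝ} (hηξ : η ξ = 1) (hgξ : ∀ X, g X ξ = η X) (hSξ : ∀ X, S X ξ = s * η X)
    (hD : ∀ X Y, D X * η Y + D Y * η X + 2 * S X Y = c * g X Y) (X : V) :
    D X = (c / 2 - s) * η X := by
  have hDξ : D ξ = c / 2 - s := by
    have hξξ := hD ξ ξ
    rw [hSξ, hgξ, hηξ] at hξξ
    linear_combination hξξ / 2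
  have hXξ := hD X ξ
  rw [hSξ, hgξ, hηξ, hDξ] at hXξ
  linear_combination hXξ

theorem stmt_3_general {V : Type*}
    (n : ℕ)
    (g S L : V → V → ℝ) (nab : V → V → V) (η Db : V → ℝ) (ξ : V)
    (b f₁ f₃ lam p : ℝ)
    (hηξ : η ξ = 1)
    (hgξ : ∀ X, g X ξ = η X)
    (hSξ : ∀ X, S X ξ = 2 * (n : ℝ) * (f₁ - f₃) * η X)
    (hskew : ∀ X Y, g (nab X ξ) Y + g X (nab Y ξ) = 0)
    (hLie : ∀ X Y, L X Y = b * (g (nab X ξ) Y + g X (nab Y ξ))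
      + Db X * η Y + Db Y * η X)
    (hsol : ∀ X Y, L X Y + 2 * S X Y =
      (2 * lam - (p + 2 / (2 * (n : ℝ) + 1))) * g X Y) :
    (∀ X Y, Db X * η Y + Db Y * η X + 2 * S X Y =
      (2 * lam - (p + 2 / (2 * (n : ℝ) + 1))) * g X Y) ∧
    (∀ X, Db X =
      (lam - (p / 2 + 1 / (2 * (n : ℝ) + 1)) - 2 * (n : ℝ) * (f₁ - f₃)) * η X) := by
  have hsym := soliton_eq_of_killing_reeb hskew hLie hsol
  refine ⟨hsym, fun X => ?_⟩
  rw [eq_mul_eta_of_symmetrized_eq hηξ hgξ hSξ hsym X]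
  ring

/-- Conformal Ricci soliton with potential V = bξ pointwise collinear with the Reeb field:
X(b)η(Y) + Y(b)η(X) + 2S(X,Y) = [2λ - (p + 2/(2n+1))]g(X,Y), and evaluating at Y = ξ gives
db = [λ - (p/2 + 1/(2n+1)) - 2n(f₁-f₃)]η. -/
theorem stmt_3 {V : Type*} [AddCommGroup V] [Module ℝ V]
    (n : ℕ) (hn : 1 ≤ n)
    (g S L : V → V → ℝ) (nab : V → V → V) (φm h : V → V) (η Db : V → ℝ) (ξ : V)
    (b f₁ f₃ f₄ f₆ lam p : ℝ)
    (hηξ : η ξ = 1)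
    (hgξ : ∀ X, g X ξ = η X)
    (gsym : ∀ X Y, g X Y = g Y X)
    (hSξ : ∀ X, S X ξ = 2 * (n : ℝ) * (f₁ - f₃) * η X)
    (hSsym : ∀ X Y, S X Y = S Y X)
    (hnabxi : ∀ X, nab X ξ = (f₃ - f₁) • φm X + (f₆ - f₄) • φm (h X))
    (hskew : ∀ X Y, g (nab X ξ) Y + g X (nab Y ξ) = 0)
    (hLie : ∀ X Y, L X Y = b * (g (nab X ξ) Y + g X (nab Y ξ))
      + Db X * η Y + Db Y * η X)
    (hsol : ∀ X Y, L X Y + 2 * S X Y =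
      (2 * lam - (p + 2 / (2 * (n : ℝ) + 1))) * g X Y) :
    (∀ X Y, Db X * η Y + Db Y * η X + 2 * S X Y =
      (2 * lam - (p + 2 / (2 * (n : ℝ) + 1))) * g X Y) ∧
    (∀ X, Db X =
      (lam - (p / 2 + 1 / (2 * (n : ℝ) + 1)) - 2 * (n : ℝ) * (f₁ - f₃)) * η X) :=
  stmt_3_general n g S L nab η Db ξ b f₁ f₃ lam p hηξ hgξ hSξ hskew hLie hsol
end

section
/- Let M be a (2n+1)-dimensional generalized (κ,μ)-space form admitting a conformal Ricci soliton (g, V, λ) with V = bξ pointwise collinear with ξ. Since η is a contact form (dη ≠ 0), the function b is constant, λ = 2n(f₁-f₃) + p/2 + 1/(2n+1), M is Einstein with S(X,Y) = [λ - (p/2 + 1/(2n+1))]g(X,Y), and the scalar curvature equals r = 2n(2n+1)(f₁-f₃). -/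
/-!
Since ξ is Killing, the Lie derivative of `g` along `V = bξ` reduces to `db ⊗ η + η ⊗ db`, so the
soliton equation reads `db ⊗ η + η ⊗ db + 2S = c g`. Inserting `ξ` shows that `db` is a constant
multiple `k η`, with `k = c/2 - 2n(f₁ - f₃)`; then `0 = d²b = k dη` with `dη ≠ 0` forces `k = 0`.
Hence `b` is constant and `2S = c g` with `c = 4n(f₁ - f₃)`, which gives `λ`, and tracing gives `r`.
-/

section

variable {V : Type*} {g S : V → V → ℝ} {η ω : V → ℝ} {ξ : V} {σ c : ℝ}

theorem eq_const_mul_of_add_symm_eq (hηξ : η ξ = 1) (hgξ : ∀ X, g X ξ = η X)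
    (hSξ : ∀ X, S X ξ = σ * η X)
    (h : ∀ X Y, ω X * η Y + ω Y * η X + 2 * S X Y = c * g X Y) (X : V) :
    ω X = (c / 2 - σ) * η X := by
  have hXξ := h X ξ
  have hξξ := h ξ ξ
  rw [hηξ, hgξ, hSξ] at hXξ hξξ
  rw [hηξ] at hξξ
  linear_combination hXξ - η X * hξξ / 2

theorem const_eq_zero_of_closed (dd : (V → ℝ) → V → V → ℝ) {k : ℝ}
    (hdlin : ∀ (c : ℝ) X Y, dd (fun Z => c * η Z) X Y = c * dd η X Y)
    (hdη : ∃ X Y, dd η X Y ≠ 0) (hclosed : ∀ X Y, dd (fun Z => k * η Z) X Y = 0) :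
    k = 0 := by
  obtain ⟨X, Y, hne⟩ := hdη
  have h := hclosed X Y
  rw [hdlin] at h
  exact (mul_eq_zero.mp h).resolve_right hne

end

theorem stmt_4_general {V : Type*}
    (n : ℕ)
    (g S L : V → V → ℝ) (nab : V → V → V) (η Db : V → ℝ) (ξ : V)
    (dd : (V → ℝ) → V → V → ℝ)
    (e : Fin (2 * n + 1) → V) (r : ℝ)
    (b f₁ f₃ lam p : ℝ)
    (hηξ : η ξ = 1)
    (hgξ : ∀ X, g X ξ = η X)
    (hSξ : ∀ X, S X ξ = 2 * (n : ℝ) * (f₁ - f₃) * η X)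
    (hskew : ∀ X Y, g (nab X ξ) Y + g X (nab Y ξ) = 0)
    (hLie : ∀ X Y, L X Y = b * (g (nab X ξ) Y + g X (nab Y ξ))
      + Db X * η Y + Db Y * η X)
    (hsol : ∀ X Y, L X Y + 2 * S X Y =
      (2 * lam - (p + 2 / (2 * (n : ℝ) + 1))) * g X Y)
    -- d² = 0 applied to b :
    (hd2 : ∀ X Y, dd Db X Y = 0)
    -- d is linear over constants on the 1-form η :
    (hdlin : ∀ (c : ℝ) X Y, dd (fun Z => c * η Z) X Y = c * dd η X Y)
    -- η is a contact form : dη ≠ 0 :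
    (hdeta : ∃ X Y, dd η X Y ≠ 0)
    -- traces over an orthonormal frame :
    (htrS : r = ∑ i, S (e i) (e i))
    (htrg : ∑ i, g (e i) (e i) = 2 * (n : ℝ) + 1) :
    (∀ X, Db X = 0) ∧
    lam = 2 * (n : ℝ) * (f₁ - f₃) + p / 2 + 1 / (2 * (n : ℝ) + 1) ∧
    (∀ X Y, S X Y = (lam - (p / 2 + 1 / (2 * (n : ℝ) + 1))) * g X Y) ∧
    r = 2 * (n : ℝ) * (2 * (n : ℝ) + 1) * (f₁ - f₃) := by
  set c : ℝ := 2 * lam - (p + 2 / (2 * (n : ℝ) + 1))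
  have hsol' : ∀ X Y, Db X * η Y + Db Y * η X + 2 * S X Y = c * g X Y := fun X Y => by
    linear_combination hsol X Y - hLie X Y - b * hskew X Y
  have hDb := eq_const_mul_of_add_symm_eq hηξ hgξ hSξ hsol'
  have hk : c / 2 - 2 * (n : ℝ) * (f₁ - f₃) = 0 :=
    const_eq_zero_of_closed dd hdlin hdeta (funext hDb ▸ hd2)
  have hDb0 : ∀ X, Db X = 0 := fun X => by rw [hDb, hk, zero_mul]
  have hEin : ∀ X Y, S X Y = c / 2 * g X Y := fun X Y => by
    linear_combination (hsol' X Y) / 2 - η Y * hDb0 X / 2 - η X * hDb0 Y / 2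
  refine ⟨hDb0, by linear_combination hk, fun X Y => by rw [hEin]; ring, ?_⟩
  rw [htrS, Finset.sum_congr rfl fun i _ => hEin (e i) (e i), ← Finset.mul_sum, htrg]
  linear_combination (2 * (n : ℝ) + 1) * hk

/-- Theorem 3.3: for a conformal Ricci soliton with V = bξ on a generalized (κ,μ)-space
form (dη ≠ 0), b is constant, λ = 2n(f₁-f₃) + p/2 + 1/(2n+1), M is Einstein with
S = [λ - (p/2 + 1/(2n+1))]g, and the scalar curvature is r = 2n(2n+1)(f₁-f₃). -/
theorem stmt_4 {V : Type*} [AddCommGroup V] [Module ℝ V]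
    (n : ℕ) (hn : 1 ≤ n)
    (g S L : V → V → ℝ) (nab : V → V → V) (φm h : V → V) (η Db : V → ℝ) (ξ : V)
    (dd : (V → ℝ) → V → V → ℝ)
    (e : Fin (2 * n + 1) → V) (r : ℝ)
    (b f₁ f₃ f₄ f₆ lam p : ℝ)
    (hηξ : η ξ = 1)
    (hgξ : ∀ X, g X ξ = η X)
    (gsym : ∀ X Y, g X Y = g Y X)
    (hSξ : ∀ X, S X ξ = 2 * (n : ℝ) * (f₁ - f₃) * η X)
    (hSsym : ∀ X Y, S X Y = S Y X)
    (hnabxi : ∀ X, nab X ξ = (f₃ - f₁) • φm X + (f₆ - f₄) • φm (h X))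
    (hskew : ∀ X Y, g (nab X ξ) Y + g X (nab Y ξ) = 0)
    (hLie : ∀ X Y, L X Y = b * (g (nab X ξ) Y + g X (nab Y ξ))
      + Db X * η Y + Db Y * η X)
    (hsol : ∀ X Y, L X Y + 2 * S X Y =
      (2 * lam - (p + 2 / (2 * (n : ℝ) + 1))) * g X Y)
    -- d² = 0 applied to b :
    (hd2 : ∀ X Y, dd Db X Y = 0)
    -- d is linear over constants on the 1-form η :
    (hdlin : ∀ (c : ℝ) X Y, dd (fun Z => c * η Z) X Y = c * dd η X Y)
    -- η is a contact form : dη ≠ 0 :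
    (hdeta : ∃ X Y, dd η X Y ≠ 0)
    -- traces over an orthonormal frame :
    (htrS : r = ∑ i, S (e i) (e i))
    (htrg : ∑ i, g (e i) (e i) = 2 * (n : ℝ) + 1)
    (htrη : ∑ i, Db (e i) * η (e i) = Db ξ) :
    (∀ X, Db X = 0) ∧
    lam = 2 * (n : ℝ) * (f₁ - f₃) + p / 2 + 1 / (2 * (n : ℝ) + 1) ∧
    (∀ X Y, S X Y = (lam - (p / 2 + 1 / (2 * (n : ℝ) + 1))) * g X Y) ∧
    r = 2 * (n : ℝ) * (2 * (n : ℝ) + 1) * (f₁ - f₃) :=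
  stmt_4_general n g S L nab η Db ξ dd e r b f₁ f₃ lam p hηξ hgξ hSξ hskew hLie hsol hd2 hdlin hdeta
    htrS htrg
end
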